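/- arXiv:1510.06211 — 8 statements merged into one kernel-verified Lean document; each statement's English description precedes it below -/
import Mathlib

section
/- In a finite connected directed graded graph satisfying the local diamond-completion property (any two outgoing edges from a common vertex can be completed to a commuting square, and dually for incoming edges), there is a unique minimal vertex (vertex with no incoming edge) and a unique maximal vertex (vertex with no outgoing edge). -/
/-!
The diamond property makes the edge relation locally confluent, so by the Church–Rosser
argument any two vertices of the (connected) graph have a common descendant. A vertex without
outgoing edges is its own only descendant, hence all such vertices coincide; one exists since a
vertex of maximal grade has no outgoing edge. Reversing the edges gives the statement for
minimal vertices.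
-/

namespace Relation

variable {V : Type*} {E : V → V → Prop}

theorem join_reflTransGen_of_diamond
    (hconn : ∀ v w : V, ReflTransGen (fun a b => E a b ∨ E b a) v w)
    (hdiamond : ∀ v₁ v₂ v₃ : V, E v₁ v₂ → E v₁ v₃ → v₂ ≠ v₃ → ∃ v₄, E v₂ v₄ ∧ E v₃ v₄)
    (v w : V) : Join (ReflTransGen E) v w := by
  have hjoin : Equivalence (Join (ReflTransGen E)) := by
    refine equivalence_join_reflTransGen fun a b c hab hac => ?_
    by_cases hbc : b = c
    · exact ⟨b, .refl, hbc ▸ .refl⟩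
    · obtain ⟨d, hbd, hcd⟩ := hdiamond a b c hab hac hbc
      exact ⟨d, .single hbd, .single hcd⟩
  induction hconn v w with
  | refl => exact hjoin.refl v
  | tail _ hbc ih =>
    refine hjoin.trans ih ?_
    rcases hbc with hbc | hcb
    · exact ⟨_, .single hbc, .refl⟩
    · exact ⟨_, .refl, .single hcb⟩

theorem ReflTransGen.eq_of_forall_not {v w : V} (hv : ∀ v', ¬ E v v')
    (h : ReflTransGen E v w) : v = w := by
  rcases h.cases_head with rfl | ⟨u, hvu, -⟩
  · rfl
  · exact absurd hvu (hv u)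

end Relation

open Relation

theorem exists_forall_not_of_strictMono_along {V α : Type*} [Finite V] [Nonempty V]
    [LinearOrder α] {E : V → V → Prop} (f : V → α) (hf : ∀ v v', E v v' → f v < f v') :
    ∃ v, ∀ v', ¬ E v v' := by
  obtain ⟨m, hm⟩ := Finite.exists_max f
  exact ⟨m, fun v' hmv' => (hf m v' hmv').not_ge (hm v')⟩

theorem existsUnique_forall_not_of_diamond {V α : Type*} [Finite V] [Nonempty V]
    [LinearOrder α] {E : V → V → Prop}
    (hconn : ∀ v w : V, ReflTransGen (fun a b => E a b ∨ E b a) v w)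
    (f : V → α) (hf : ∀ v v', E v v' → f v < f v')
    (hdiamond : ∀ v₁ v₂ v₃ : V, E v₁ v₂ → E v₁ v₃ → v₂ ≠ v₃ → ∃ v₄, E v₂ v₄ ∧ E v₃ v₄) :
    ∃! v : V, ∀ v' : V, ¬ E v v' := by
  obtain ⟨m, hm⟩ := exists_forall_not_of_strictMono_along f hf
  refine ⟨m, hm, fun w hw => ?_⟩
  obtain ⟨u, hwu, hmu⟩ := join_reflTransGen_of_diamond hconn hdiamond w m
  exact (hwu.eq_of_forall_not hw).trans (hmu.eq_of_forall_not hm).symm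

/-- A finite connected directed graph graded by `f : V → ℕ`
(so `f v' = f v + 1` along each edge `v → v'`), satisfying the local diamond
completion property for outgoing edges and dually for incoming edges, has a
unique minimal vertex (no incoming edge) and a unique maximal vertex (no
outgoing edge). -/
theorem stmt_1 {V : Type*} [Fintype V] [Nonempty V] (E : V → V → Prop)
    (hconn : ∀ v w : V, Relation.ReflTransGen (fun a b => E a b ∨ E b a) v w)
    (f : V → ℕ) (hgrade : ∀ v v' : V, E v v' → f v' = f v + 1)
    (hdiamondOut : ∀ v₁ v₂ v₃ : V, E v₁ v₂ → E v₁ v₃ → v₂ ≠ v₃ →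
      ∃ v₄, E v₂ v₄ ∧ E v₃ v₄)
    (hdiamondIn : ∀ v₁ v₂ v₃ : V, E v₂ v₁ → E v₃ v₁ → v₂ ≠ v₃ →
      ∃ v₄, E v₄ v₂ ∧ E v₄ v₃) :
    (∃! v : V, ∀ v' : V, ¬ E v' v) ∧ (∃! v : V, ∀ v' : V, ¬ E v v') := by
  have hf : ∀ v v', E v v' → f v < f v' := fun v v' h => by grind
  constructor
  · have hconnRev : ∀ v w : V, ReflTransGen (fun a b => E b a ∨ E a b) v w :=
      fun v w => ReflTransGen.mono (fun _ _ => Or.symm) v w (hconn v w)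
    exact existsUnique_forall_not_of_diamond (E := flip E) hconnRev (OrderDual.toDual ∘ f)
      (fun v v' h => hf v' v h) hdiamondIn
  · exact existsUnique_forall_not_of_diamond hconn f hf hdiamondOut
end

section
/- A nonempty diagram satisfying the boundary conditions admits exactly one strongly extremal column: if its height r is odd this is the leftmost column of height r, and if r is even it is the rightmost column of height r. Moreover, a single block may be added to the top of a column C of maximal height r so that the resulting diagram still satisfies the boundary conditions if and only if C is the strongly extremal column. -/
/-- Column `i` is left extremal: nonempty and no column to its left has height `≥ ht i`. -/
def LeftExtremal {n : ℕ} (ht : Fin n → ℕ) (i : Fin n) : Prop :=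
  0 < ht i ∧ ∀ j : Fin n, j < i → ht j < ht i

/-- Column `i` is right extremal: nonempty and no column to its right has height `≥ ht i`. -/
def RightExtremal {n : ℕ} (ht : Fin n → ℕ) (i : Fin n) : Prop :=
  0 < ht i ∧ ∀ j : Fin n, i < j → ht j < ht i

/-- The maximal column height of the diagram. -/
def maxHt {n : ℕ} (ht : Fin n → ℕ) : ℕ := Finset.univ.sup ht

/-- The boundary conditions: every left extremal column has even or maximal height,
every right extremal column has odd or maximal height. -/
def Boundary {n : ℕ} (ht : Fin n → ℕ) : Prop :=
  (∀ i, LeftExtremal ht i → Even (ht i) ∨ ht i = maxHt ht) ∧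
  (∀ i, RightExtremal ht i → Odd (ht i) ∨ ht i = maxHt ht)

/-- A left even domino can be adjoined to column `i`: `ht i` is even and the column of
height `ht i + 2` obtained would have a right neighbour of height `≥ ht i + 2` at
levels `ht i + 1, ht i + 2`. -/
def CanAddLeftEven {n : ℕ} (ht : Fin n → ℕ) (i : Fin n) : Prop :=
  Even (ht i) ∧ ∃ j : Fin n, i < j ∧ ht i + 2 ≤ ht j ∧ ∀ k : Fin n, i < k → k < j → ht k ≤ ht i

/-- Dually, a right odd domino can be adjoined to column `i`. -/
def CanAddRightOdd {n : ℕ} (ht : Fin n → ℕ) (i : Fin n) : Prop :=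
  Odd (ht i) ∧ ∃ j : Fin n, j < i ∧ ht i + 2 ≤ ht j ∧ ∀ k : Fin n, j < k → k < i → ht k ≤ ht i

/-- A diagram is complete if no left even or right odd domino can be adjoined. -/
def Complete {n : ℕ} (ht : Fin n → ℕ) : Prop :=
  ∀ i, ¬ CanAddLeftEven ht i ∧ ¬ CanAddRightOdd ht i

/-- Column `i` is strongly extremal: it has the maximal height `r` and is the
leftmost column of height `r` when `r` is odd, the rightmost when `r` is even. -/
def StronglyExtremal {n : ℕ} (ht : Fin n → ℕ) (i : Fin n) : Prop :=
  ht i = maxHt ht ∧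
    (Odd (maxHt ht) → ∀ j : Fin n, j < i → ht j < maxHt ht) ∧
    (Even (maxHt ht) → ∀ j : Fin n, i < j → ht j < maxHt ht)


/-!
Putting a block on top of a column `i` of maximal height `r` makes `i` the unique tallest
column. Every other column then stays extremal only on its own side of `i`, and loses the
escape clause "has maximal height"; so the new diagram satisfies the boundary conditions iff
every left extremal column left of `i` is even and every right extremal column right of `i`
is odd. Under the old boundary conditions the only possible offender on the left is the
leftmost column of height `r`, which offends iff `r` is odd; dually on the right. This is
exactly strong extremality of `i`.
-/

open Function

section Diagram

variable {n : ℕ} {ht : Fin n → ℕ} {i j : Fin n}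

lemma le_maxHt (ht : Fin n → ℕ) (j : Fin n) : ht j ≤ maxHt ht :=
  Finset.le_sup (Finset.mem_univ j)

lemma maxHt_update_of_le {v : ℕ} (hv : maxHt ht ≤ v) : maxHt (update ht i v) = v := by
  refine le_antisymm (Finset.sup_le fun j _ => ?_) ?_
  · rcases eq_or_ne j i with rfl | hji
    · simp
    · rw [update_of_ne hji]
      exact (le_maxHt ht j).trans hv
  · simpa using le_maxHt (update ht i v) i

lemma exists_leftmost_eq_maxHt [Nonempty (Fin n)] (ht : Fin n → ℕ) :
    ∃ i, ht i = maxHt ht ∧ ∀ j < i, ht j < maxHt ht := by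
  obtain ⟨i₀, -, hi₀⟩ := Finset.exists_mem_eq_sup Finset.univ Finset.univ_nonempty ht
  obtain ⟨i, hi, hmin⟩ :=
    (Finset.univ.filter fun j => ht j = maxHt ht).exists_min_image id
      ⟨i₀, Finset.mem_filter.2 ⟨Finset.mem_univ _, hi₀.symm⟩⟩
  refine ⟨i, (Finset.mem_filter.1 hi).2, fun j hj => (le_maxHt ht j).lt_of_ne fun hjr => ?_⟩
  exact (hmin j (by simp [hjr])).not_gt hj

lemma exists_rightmost_eq_maxHt [Nonempty (Fin n)] (ht : Fin n → ℕ) :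
    ∃ i, ht i = maxHt ht ∧ ∀ j, i < j → ht j < maxHt ht := by
  obtain ⟨i₀, -, hi₀⟩ := Finset.exists_mem_eq_sup Finset.univ Finset.univ_nonempty ht
  obtain ⟨i, hi, hmax⟩ :=
    (Finset.univ.filter fun j => ht j = maxHt ht).exists_max_image id
      ⟨i₀, Finset.mem_filter.2 ⟨Finset.mem_univ _, hi₀.symm⟩⟩
  refine ⟨i, (Finset.mem_filter.1 hi).2, fun j hj => (le_maxHt ht j).lt_of_ne fun hjr => ?_⟩
  exact (hmax j (by simp [hjr])).not_gt hj

lemma StronglyExtremal.not_lt (hi : StronglyExtremal ht i) (hj : StronglyExtremal ht j) :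
    ¬ i < j := by
  intro hij
  rcases Nat.even_or_odd (maxHt ht) with hr | hr
  · exact (hi.2.2 hr j hij).ne hj.1
  · exact (hj.2.1 hr i hij).ne hi.1

lemma StronglyExtremal.eq (hi : StronglyExtremal ht i) (hj : StronglyExtremal ht j) : i = j :=
  le_antisymm (le_of_not_gt (hj.not_lt hi)) (le_of_not_gt (hi.not_lt hj))

lemma existsUnique_stronglyExtremal [Nonempty (Fin n)] (ht : Fin n → ℕ) :
    ∃! i, StronglyExtremal ht i := by
  suffices ∃ i, StronglyExtremal ht i from
    let ⟨i, hi⟩ := this; ⟨i, hi, fun _ hj => hj.eq hi⟩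
  rcases Nat.even_or_odd (maxHt ht) with hr | hr
  · obtain ⟨i, hi, hright⟩ := exists_rightmost_eq_maxHt ht
    exact ⟨i, hi, fun hodd => absurd hr (Nat.not_even_iff_odd.2 hodd), fun _ => hright⟩
  · obtain ⟨i, hi, hleft⟩ := exists_leftmost_eq_maxHt ht
    exact ⟨i, hi, fun _ => hleft, fun heven => absurd hr (Nat.not_odd_iff_even.2 heven)⟩

lemma leftExtremal_update_iff {v : ℕ} (hv : maxHt ht < v) (hji : j ≠ i) :
    LeftExtremal (update ht i v) j ↔ j < i ∧ LeftExtremal ht j := by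
  simp only [LeftExtremal, update_of_ne hji]
  constructor
  · rintro ⟨hpos, hleft⟩
    have hji' : j < i := lt_of_not_ge fun hij => by
      have := hleft i (hij.lt_of_ne hji.symm)
      rw [update_self] at this
      exact (le_maxHt ht j).not_gt (hv.trans this)
    refine ⟨hji', hpos, fun k hk => ?_⟩
    simpa [update_of_ne (hk.trans hji').ne] using hleft k hk
  · rintro ⟨hji', hpos, hleft⟩
    exact ⟨hpos, fun k hk => by simpa [update_of_ne (hk.trans hji').ne] using hleft k hk⟩

lemma rightExtremal_update_iff {v : ℕ} (hv : maxHt ht < v) (hji : j ≠ i) :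
    RightExtremal (update ht i v) j ↔ i < j ∧ RightExtremal ht j := by
  simp only [RightExtremal, update_of_ne hji]
  constructor
  · rintro ⟨hpos, hright⟩
    have hij : i < j := lt_of_not_ge fun hji' => by
      have := hright i (hji'.lt_of_ne hji)
      rw [update_self] at this
      exact (le_maxHt ht j).not_gt (hv.trans this)
    refine ⟨hij, hpos, fun k hk => ?_⟩
    simpa [update_of_ne (hij.trans hk).ne'] using hright k hk
  · rintro ⟨hij, hpos, hright⟩
    exact ⟨hpos, fun k hk => by simpa [update_of_ne (hij.trans hk).ne'] using hright k hk⟩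

lemma boundary_update_iff {v : ℕ} (hv : maxHt ht < v) :
    Boundary (update ht i v) ↔
      (∀ j < i, LeftExtremal ht j → Even (ht j)) ∧
        (∀ j, i < j → RightExtremal ht j → Odd (ht j)) := by
  have hmax : maxHt (update ht i v) = v := maxHt_update_of_le hv.le
  have hne : ∀ j, ht j ≠ v := fun j => ((le_maxHt ht j).trans_lt hv).ne
  refine and_congr (forall_congr' fun j => ?_) (forall_congr' fun j => ?_) <;>
    rcases eq_or_ne j i with rfl | hji
  · simp [hmax]
  · simp [leftExtremal_update_iff hv hji, update_of_ne hji, hmax, hne]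
  · simp [hmax]
  · simp [rightExtremal_update_iff hv hji, update_of_ne hji, hmax, hne]

lemma forall_leftExtremal_even_iff
    (hb : ∀ j, LeftExtremal ht j → Even (ht j) ∨ ht j = maxHt ht) :
    (∀ j < i, LeftExtremal ht j → Even (ht j)) ↔
      (Odd (maxHt ht) → ∀ j < i, ht j < maxHt ht) := by
  constructor
  · intro h hodd j hji
    refine (le_maxHt ht j).lt_of_ne fun hj => ?_
    have : Nonempty (Fin n) := ⟨j⟩
    obtain ⟨k, hk, hleft⟩ := exists_leftmost_eq_maxHt ht
    have hkj : k ≤ j := not_lt.1 fun hjk => (hleft j hjk).ne hj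
    have hkl : LeftExtremal ht k := ⟨hk ▸ hodd.pos, hk ▸ hleft⟩
    exact Nat.not_even_iff_odd.2 hodd (hk ▸ h k (hkj.trans_lt hji) hkl)
  · intro h j hji hj
    refine (hb j hj).elim id fun hjr => ?_
    by_contra heven
    exact (h (hjr ▸ Nat.not_even_iff_odd.1 heven) j hji).ne hjr

lemma forall_rightExtremal_odd_iff
    (hb : ∀ j, RightExtremal ht j → Odd (ht j) ∨ ht j = maxHt ht) (hr : 0 < maxHt ht) :
    (∀ j, i < j → RightExtremal ht j → Odd (ht j)) ↔
      (Even (maxHt ht) → ∀ j, i < j → ht j < maxHt ht) := by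
  constructor
  · intro h heven j hij
    refine (le_maxHt ht j).lt_of_ne fun hj => ?_
    have : Nonempty (Fin n) := ⟨j⟩
    obtain ⟨k, hk, hright⟩ := exists_rightmost_eq_maxHt ht
    have hjk : j ≤ k := not_lt.1 fun hkj => (hright j hkj).ne hj
    have hkr : RightExtremal ht k := ⟨hk ▸ hr, hk ▸ hright⟩
    exact Nat.not_odd_iff_even.2 heven (hk ▸ h k (hij.trans_le hjk) hkr)
  · intro h j hij hj
    refine (hb j hj).elim id fun hjr => ?_
    by_contra hodd
    exact (h (hjr ▸ Nat.not_odd_iff_even.1 hodd) j hij).ne hjr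

end Diagram

/-- a nonempty diagram satisfying the boundary conditions has exactly one
strongly extremal column; moreover a single block may be added on top of a column `i`
of maximal height with the boundary conditions preserved iff `i` is strongly extremal. -/
theorem stmt_6 (t : ℕ) (ht : Fin (t+1) → ℕ) (hb : Boundary ht) (hne : ∃ i, 0 < ht i) :
    (∃! i : Fin (t+1), StronglyExtremal ht i) ∧
    ∀ i : Fin (t+1), ht i = maxHt ht →
      (Boundary (Function.update ht i (ht i + 1)) ↔ StronglyExtremal ht i) := by
  refine ⟨existsUnique_stronglyExtremal ht, fun i hi => ?_⟩
  obtain ⟨j, hj⟩ := hne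
  have hr : 0 < maxHt ht := hj.trans_le (le_maxHt ht j)
  rw [boundary_update_iff (by omega), forall_leftExtremal_even_iff hb.1,
    forall_rightExtremal_odd_iff hb.2 hr]
  simp only [StronglyExtremal, hi, true_and]
end

section
/- If a graph 𝒢 satisfying P₁, P₂ satisfies property P₁₀ (for any path p between vertices v, v' with i_v = i_{v'}, the path sum S_p(v,v') does not depend on r^{i_v}) for all bivalent paths, then it satisfies P₁₀ for all paths. -/
/-- The path sum `S_p = Σ_{j<m} c_{el(p j, p (j+1))} (r^{i_{p(j+1)}} − r^{i_{p j}})`,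
with `r^i` realised as the standard basis vector `Pi.single i 1`, so that the
coefficient of `r^i` in `S_p` is its value at `i`. -/
def pathSum {V : Type*} (t : ℕ) (iv : V → Fin (t+1)) (el : V → V → Fin t)
    (co : Fin t → ℝ) (m : ℕ) (p : ℕ → V) : Fin (t+1) → ℝ :=
  ∑ j ∈ Finset.range m, co (el (p j) (p (j+1))) •
    (Pi.single (iv (p (j+1))) (1:ℝ) - Pi.single (iv (p j)) (1:ℝ))

lemma pathSum_split {V : Type*} (t : ℕ) (iv : V → Fin (t+1)) (el : V → V → Fin t)
    (co : Fin t → ℝ) (a b : ℕ) (p : ℕ → V) :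
    pathSum t iv el co (a + b) p =
      pathSum t iv el co a p + pathSum t iv el co b (fun n => p (a + n)) := by
  unfold pathSum
  rw [Finset.sum_range_add]
  simp [Nat.add_assoc]

/-- in a labelled graph satisfying P₁ (adjacent vertex labels distinct)
and P₂ (edges at a common vertex have distinct labels), if for every bivalent path the
path sum does not depend on `r^{i_v}` (its coefficient at the common endpoint label is
zero), then the same holds for every path whose endpoints have equal vertex labels. -/
theorem stmt_10 {V : Type*} (t : ℕ) (E : V → V → Prop)
    (iv : V → Fin (t+1)) (el : V → V → Fin t) (co : Fin t → ℝ)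
    (hP1 : ∀ v v', E v v' → iv v ≠ iv v')
    (hP2 : ∀ v v' v'', E v v' → E v v'' → v' ≠ v'' → el v v' ≠ el v v'')
    (hbiv : ∀ (m : ℕ) (p : ℕ → V), (∀ j < m, E (p j) (p (j+1))) →
      iv (p 0) = iv (p m) → (∀ j, 0 < j → j < m → iv (p j) ≠ iv (p 0)) →
      pathSum t iv el co m p (iv (p 0)) = 0) :
    ∀ (m : ℕ) (p : ℕ → V), (∀ j < m, E (p j) (p (j+1))) →
      iv (p 0) = iv (p m) →
      pathSum t iv el co m p (iv (p 0)) = 0 := by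
  intro m
  induction m using Nat.strong_induction_on with
  | _ m IH =>
    intro p hE hend
    classical
    by_cases h : ∃ j, 0 < j ∧ j < m ∧ iv (p j) = iv (p 0)
    · set P : ℕ → Prop := fun j => 0 < j ∧ j < m ∧ iv (p j) = iv (p 0) with hP
      have hj := Nat.find_spec h
      set j := Nat.find h with hjdef
      obtain ⟨hj0, hjm, hjeq⟩ := hj
      have hm : m = j + (m - j) := by omega
      have hsplit := pathSum_split t iv el co j (m - j) p
      rw [hm, hsplit]
      have h1 : pathSum t iv el co j p (iv (p 0)) = 0 := by
        apply hbiv j p (fun j' hj' => hE j' (by omega)) hjeq.symm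
        intro j' hj'0 hj'j
        intro hcontra
        have := Nat.find_min h (m := j') hj'j
        exact this ⟨hj'0, by omega, hcontra⟩
      have h2 : pathSum t iv el co (m - j) (fun n => p (j + n)) (iv (p 0)) = 0 := by
        have := IH (m - j) (by omega) (fun n => p (j + n))
          (fun j' hj' => by
            have : E (p (j + j')) (p (j + j' + 1)) := hE (j + j') (by omega)
            simpa [Nat.add_assoc] using this)
          (by
            rw [show j + (m - j) = m by omega, show j + 0 = j from rfl, hjeq]
            exact hend)
        rw [show iv ((fun n => p (j + n)) 0) = iv (p 0) by simpa using hjeq] at this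
        exact this
      rw [Pi.add_apply, h1, h2, add_zero]
    · apply hbiv m p hE hend
      intro j' h0 hm hcontra
      exact h ⟨j', h0, hm, hcontra⟩
end

section
/- Let 𝒢(c⁻) be an S-graph on a linearly ordered set c⁻ of t−1 coefficients, and let 𝒢(c) be obtained by binary fusion: take two relabelled copies 𝒢⁺, 𝒢⁻ of 𝒢(c⁻) (where the label s is skipped on edges and the vertex label s resp. s+1 is skipped in 𝒢⁺ resp. 𝒢⁻), and join every vertex v of 𝒢⁺ with i_v = s+1 to its mirror φ(v) in 𝒢⁻ by a new edge labelled s, where c_s is the unique maximal element of c. Then 𝒢(c) has a unique pointed chain (property P₄). -/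
/-- A pointed chain in a labelled graph with vertex labels in `Fin (m+1)` and edge
labels in `Fin m`: vertices `w i` with `i_{w i} = i`, consecutive vertices joined by
an edge labelled `i`. -/
def IsPointedChain {U : Type*} {m : ℕ} (E : U → U → Prop) (iv : U → Fin (m+1))
    (el : U → U → Fin m) (w : Fin (m+1) → U) : Prop :=
  (∀ i, iv (w i) = i) ∧
  ∀ i : Fin m, E (w i.castSucc) (w i.succ) ∧ el (w i.castSucc) (w i.succ) = i

/-- Binary fusion, edge relation: two copies `𝒢⁺ = inl`, `𝒢⁻ = inr` of the base graph,
joined by an edge between each `v ∈ 𝒢⁺` whose fused vertex label is `s+1` (i.e. base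
label `s`) and its mirror `φ(v) ∈ 𝒢⁻`. -/
def fuseE {V : Type*} {n : ℕ} (E : V → V → Prop) (iv : V → Fin (n+1))
    (s : Fin (n+1)) : (V ⊕ V) → (V ⊕ V) → Prop
  | Sum.inl v, Sum.inl w => E v w
  | Sum.inr v, Sum.inr w => E v w
  | Sum.inl v, Sum.inr w => v = w ∧ iv v = s
  | Sum.inr v, Sum.inl w => v = w ∧ iv w = s

/-- Binary fusion, vertex labels: `𝒢⁺` is relabelled by `ψ^s` (skipping the vertex
label `s`), `𝒢⁻` by `ψ^{s+1}` (skipping `s+1`). -/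
def fuseIv {V : Type*} {n : ℕ} (iv : V → Fin (n+1)) (s : Fin (n+1)) :
    (V ⊕ V) → Fin (n+2)
  | Sum.inl v => (s.castSucc).succAbove (iv v)
  | Sum.inr v => (s.succ).succAbove (iv v)

/-- Binary fusion, edge labels: old edges are relabelled by `ψ_s` (skipping `s`),
the new joining edges are labelled `s`. -/
def fuseEl {V : Type*} {n : ℕ} (el : V → V → Fin n) (s : Fin (n+1)) :
    (V ⊕ V) → (V ⊕ V) → Fin (n+1)
  | Sum.inl v, Sum.inl w => s.succAbove (el v w)
  | Sum.inr v, Sum.inr w => s.succAbove (el v w)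
  | _, _ => s


/-! A pointed chain of the fused graph lies in `𝒢⁻` up to label `s` and in `𝒢⁺` from label
`s + 1` on: the vertex labels `s` and `s + 1` occur only in `𝒢⁻` resp. `𝒢⁺`, and every edge
joining the two copies carries the label `s`, which no edge along the rest of the chain has.
The edge labelled `s` joins a vertex to its mirror, so forgetting the copies and contracting
that edge yields a pointed chain of `𝒢(c⁻)`; conversely every pointed chain of `𝒢(c⁻)` lifts,
and lifting inverts contracting. -/

namespace Fin

variable {n : ℕ}

lemma predAbove_castSucc_succAbove (s : Fin (n+1)) (i : Fin n) :
    s.predAbove (s.succAbove i).castSucc = i.castSucc := by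
  ext
  simp only [succAbove, predAbove, lt_def, val_castSucc, apply_dite Fin.val, val_pred,
    coe_castPred, dite_eq_ite, apply_ite Fin.val, val_succ]
  split_ifs <;> lia

lemma predAbove_succ_succAbove (s : Fin (n+1)) (i : Fin n) :
    s.predAbove (s.succAbove i).succ = i.succ := by
  ext
  simp only [succAbove, predAbove, lt_def, val_castSucc, apply_dite Fin.val, val_pred,
    coe_castPred, dite_eq_ite, apply_ite Fin.val, val_succ]
  split_ifs <;> lia

lemma eq_of_castSucc_succAbove_eq_succ_succAbove {s a i : Fin (n+1)}
    (h : s.castSucc.succAbove a = s.succ.succAbove i) : a = i := by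
  rw [Fin.ext_iff] at h ⊢
  simp only [succAbove, lt_def, val_castSucc, apply_ite Fin.val, val_succ] at h
  split_ifs at h <;> lia

lemma apply_eq_of_le_of_forall_castSucc_lt {α : Type*} (f : Fin (n+1) → α) {a j : Fin (n+1)}
    (hf : ∀ i : Fin n, i.castSucc < a → f i.castSucc = f i.succ) (hj : j ≤ a) : f j = f a := by
  induction a using Fin.induction with
  | zero => rw [Fin.le_zero_iff.mp hj]
  | succ a ih =>
    rcases hj.lt_or_eq with hlt | rfl
    · rw [ih (fun i hi => hf i (hi.trans (castSucc_lt_succ (i := a)))) (le_castSucc_iff.mpr hlt),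
        hf a (castSucc_lt_succ (i := a))]
    · rfl

lemma apply_eq_of_ge_of_forall_le_castSucc {α : Type*} (f : Fin (n+1) → α) {a j : Fin (n+1)}
    (hf : ∀ i : Fin n, a ≤ i.castSucc → f i.castSucc = f i.succ) (hj : a ≤ j) : f j = f a := by
  induction a using Fin.reverseInduction with
  | last => rw [Fin.last_le_iff.mp hj]
  | cast a ih =>
    rcases hj.lt_or_eq with hlt | rfl
    · rw [ih (fun i hi => hf i ((castSucc_lt_succ (i := a)).le.trans hi))
        (castSucc_lt_iff_succ_le.mp hlt), hf a le_rfl]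
    · rfl

end Fin

section Fusion

variable {V : Type*} {n : ℕ} {E : V → V → Prop} {iv : V → Fin (n+1)} {el : V → V → Fin n}
  {s : Fin (n+1)} {x y : V ⊕ V}

lemma isRight_of_fuseIv_eq_castSucc (h : fuseIv iv s x = s.castSucc) : x.isRight := by
  cases x with
  | inl v => exact absurd h (Fin.succAbove_ne _ _)
  | inr v => rfl

lemma isLeft_of_fuseIv_eq_succ (h : fuseIv iv s x = s.succ) : x.isLeft := by
  cases x with
  | inl v => rfl
  | inr v => exact absurd h (Fin.succAbove_ne _ _)

lemma isRight_eq_of_fuseEl_ne (h : fuseEl el s x y ≠ s) : x.isRight = y.isRight := by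
  cases x <;> cases y <;> first | rfl | exact absurd rfl h

lemma iv_elim_of_fuseIv_eq {i : Fin (n+1)} (h : fuseIv iv s x = s.succ.succAbove i) :
    iv (Sum.elim id id x) = i := by
  cases x with
  | inl v => exact Fin.eq_of_castSucc_succAbove_eq_succ_succAbove h
  | inr v => exact Fin.succAbove_right_injective h

lemma fuseE_elim_of_fuseEl_eq_succAbove {i : Fin n} (hE : fuseE E iv s x y)
    (hl : fuseEl el s x y = s.succAbove i) :
    E (Sum.elim id id x) (Sum.elim id id y) ∧ el (Sum.elim id id x) (Sum.elim id id y) = i := by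
  cases x <;> cases y
  case inl.inl | inr.inr => exact ⟨hE, Fin.succAbove_right_injective hl⟩
  all_goals exact absurd hl.symm (Fin.succAbove_ne _ _)

lemma elim_eq_of_fuseEl_eq_self (hE : fuseE E iv s x y) (hl : fuseEl el s x y = s) :
    Sum.elim id id x = Sum.elim id id y := by
  cases x <;> cases y
  case inl.inl | inr.inr => exact absurd hl (Fin.succAbove_ne _ _)
  all_goals exact hE.1

def liftChain (s : Fin (n+1)) (w : Fin (n+1) → V) (j : Fin (n+2)) : V ⊕ V :=
  if j ≤ s.castSucc then .inr (w (s.predAbove j)) else .inl (w (s.predAbove j))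

def projectChain (s : Fin (n+1)) (W : Fin (n+2) → V ⊕ V) (i : Fin (n+1)) : V :=
  Sum.elim id id (W (s.succ.succAbove i))

lemma isPointedChain_liftChain {w : Fin (n+1) → V} (hw : IsPointedChain E iv el w) :
    IsPointedChain (fuseE E iv s) (fuseIv iv s) (fuseEl el s) (liftChain s w) := by
  refine ⟨fun j => ?_, fun i => ?_⟩
  · unfold liftChain
    split_ifs with hj
    · simpa [fuseIv, hw.1] using Fin.succ_succAbove_predAbove
        (ne_of_lt (hj.trans_lt (Fin.castSucc_lt_succ (i := s))))
    · simpa [fuseIv, hw.1] using Fin.succAbove_predAbove (ne_of_gt (not_le.mp hj))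
  · by_cases hi : i = s
    · subst hi
      simp [liftChain, fuseE, fuseEl, hw.1]
    obtain ⟨i, rfl⟩ := Fin.exists_succAbove_eq hi
    have same_side :
        (s.succAbove i).castSucc ≤ s.castSucc ↔ (s.succAbove i).succ ≤ s.castSucc := by
      rw [Fin.castSucc_le_castSucc_iff, Fin.succ_le_castSucc_iff]
      exact ⟨fun h => lt_of_le_of_ne h (Fin.succAbove_ne _ _), le_of_lt⟩
    simp only [liftChain, Fin.predAbove_castSucc_succAbove, Fin.predAbove_succ_succAbove,
      same_side]
    split_ifs <;> exact ⟨(hw.2 i).1, congrArg s.succAbove (hw.2 i).2⟩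

variable {W : Fin (n+2) → V ⊕ V}

lemma isRight_iff_of_isPointedChain_fuse
    (hW : IsPointedChain (fuseE E iv s) (fuseIv iv s) (fuseEl el s) W) (j : Fin (n+2)) :
    (W j).isRight ↔ j ≤ s.castSucc := by
  have step (i : Fin (n+1)) (hi : i ≠ s) : (W i.castSucc).isRight = (W i.succ).isRight :=
    isRight_eq_of_fuseEl_ne ((hW.2 i).2 ▸ hi)
  have right_at_s : (W s.castSucc).isRight := isRight_of_fuseIv_eq_castSucc (hW.1 _)
  have left_at_succ : (W s.succ).isLeft := isLeft_of_fuseIv_eq_succ (hW.1 _)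
  by_cases hj : j ≤ s.castSucc
  · simp only [hj, iff_true]
    rw [Fin.apply_eq_of_le_of_forall_castSucc_lt (fun j => (W j).isRight)
      (fun i hi => step i (ne_of_lt (Fin.castSucc_lt_castSucc_iff.mp hi))) hj]
    exact right_at_s
  · simp only [hj, iff_false]
    rw [Fin.apply_eq_of_ge_of_forall_le_castSucc (fun j => (W j).isRight)
      (fun i hi => step i (fun his => (Fin.succ_le_castSucc_iff.mp (his ▸ hi)).false))
      (Fin.castSucc_lt_iff_succ_le.mp (not_le.mp hj))]
    simpa using left_at_succ

lemma elim_eq_projectChain_predAbove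
    (hW : IsPointedChain (fuseE E iv s) (fuseIv iv s) (fuseEl el s) W) (j : Fin (n+2)) :
    Sum.elim id id (W j) = projectChain s W (s.predAbove j) := by
  unfold projectChain
  by_cases hj : j = s.succ
  · subst hj
    rw [Fin.predAbove_succ_self, Fin.succAbove_succ_self]
    exact (elim_eq_of_fuseEl_eq_self (hW.2 s).1 (hW.2 s).2).symm
  · rw [Fin.succ_succAbove_predAbove hj]

lemma isPointedChain_projectChain
    (hW : IsPointedChain (fuseE E iv s) (fuseIv iv s) (fuseEl el s) W) :
    IsPointedChain E iv el (projectChain s W) := by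
  refine ⟨fun i => iv_elim_of_fuseIv_eq (hW.1 _), fun i => ?_⟩
  have := fuseE_elim_of_fuseEl_eq_succAbove (hW.2 (s.succAbove i)).1 (hW.2 (s.succAbove i)).2
  rwa [elim_eq_projectChain_predAbove hW, elim_eq_projectChain_predAbove hW,
    Fin.predAbove_castSucc_succAbove, Fin.predAbove_succ_succAbove] at this

lemma liftChain_projectChain
    (hW : IsPointedChain (fuseE E iv s) (fuseIv iv s) (fuseEl el s) W) :
    liftChain s (projectChain s W) = W := by
  funext j
  have := isRight_iff_of_isPointedChain_fuse hW j
  rw [liftChain, ← elim_eq_projectChain_predAbove hW]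
  cases h : W j <;> simp_all

end Fusion

theorem stmt_11_general {V : Type*} {n : ℕ} (E : V → V → Prop) (iv : V → Fin (n+1))
    (el : V → V → Fin n) (s : Fin (n+1))
    (hP4 : ∃! w : Fin (n+1) → V, IsPointedChain E iv el w) :
    ∃! w : Fin (n+2) → (V ⊕ V),
      IsPointedChain (fuseE E iv s) (fuseIv iv s) (fuseEl el s) w := by
  obtain ⟨w, hw, huniq⟩ := hP4
  refine ⟨liftChain s w, isPointedChain_liftChain hw, fun W hW => ?_⟩
  rw [← liftChain_projectChain hW, huniq _ (isPointedChain_projectChain hW)]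

/-- if the base graph `𝒢(c⁻)` (an S-graph; in particular satisfying
P₁, P₂ and having a unique pointed chain) is fused into `𝒢(c)` by binary fusion,
then `𝒢(c)` has a unique pointed chain (property P₄). -/
theorem stmt_11 {V : Type*} {n : ℕ} (E : V → V → Prop) (iv : V → Fin (n+1))
    (el : V → V → Fin n) (s : Fin (n+1))
    (hEsymm : ∀ v w, E v w → E w v)
    (helsymm : ∀ v w, el v w = el w v)
    (hP1 : ∀ v w, E v w → iv v ≠ iv w)
    (hP2 : ∀ v w w', E v w → E v w' → w ≠ w' → el v w ≠ el v w')
    (hP4 : ∃! w : Fin (n+1) → V, IsPointedChain E iv el w) :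
    ∃! w : Fin (n+2) → (V ⊕ V),
      IsPointedChain (fuseE E iv s) (fuseIv iv s) (fuseEl el s) w :=
  stmt_11_general E iv el s hP4
end

section
/- Under binary fusion of an S-graph 𝒢(c⁻) into 𝒢(c) (with c_s the unique maximal element of the linear order c), every triad (a,b,c,d) of 𝒢(c) not lying entirely in 𝒢⁺ or 𝒢⁻ has middle edge labelled s, outer edges with a common label different from s, and satisfies i_a = i_d; consequently 𝒢(c) is triadic and the partial order on edge labels defined by its triads lifts to the given linear order c. -/
/-- A triad: four distinct vertices joined successively by edges `(a,b),(b,c),(c,d)`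
with equal outer edge labels. -/
def IsTriad {U : Type*} {m : ℕ} (E : U → U → Prop) (el : U → U → Fin m)
    (a b c d : U) : Prop :=
  E a b ∧ E b c ∧ E c d ∧ el a b = el c d ∧ a ≠ c ∧ b ≠ d ∧ a ≠ d

/-- under binary fusion (with `c_s` the unique maximal coefficient, the
coefficient order being the strict linear order `lt`), every triad of `𝒢(c)` not lying
entirely in `𝒢⁺` or in `𝒢⁻` has middle edge labelled `s` and outer edges with common
label `≠ s`, and satisfies `i_a = i_d`; consequently `𝒢(c)` is triadic and the order
relations `i_{a,b} < i_{b,c}` defined by its triads all hold in the linear order `lt`. -/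
theorem stmt_12 {V : Type*} {n : ℕ} (E : V → V → Prop) (iv : V → Fin (n+1))
    (el : V → V → Fin n) (s : Fin (n+1))
    (lt : Fin (n+1) → Fin (n+1) → Prop)
    (hltirr : ∀ i, ¬ lt i i) (hlttrans : Transitive lt)
    (hlttot : ∀ i j, i ≠ j → lt i j ∨ lt j i)
    (hmax : ∀ j, j ≠ s → lt j s)
    (hEsymm : ∀ v w, E v w → E w v)
    (helsymm : ∀ v w, el v w = el w v)
    (hP1 : ∀ v w, E v w → iv v ≠ iv w)
    (hP2 : ∀ v w w', E v w → E v w' → w ≠ w' → el v w ≠ el v w')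
    (htriadic : ∀ a b c d, IsTriad E el a b c d → iv a = iv d)
    (horder : ∀ a b c d, IsTriad E el a b c d →
      lt (s.succAbove (el a b)) (s.succAbove (el b c))) :
    (∀ a b c d, IsTriad (fuseE E iv s) (fuseEl el s) a b c d →
        ¬ (a.isLeft ∧ b.isLeft ∧ c.isLeft ∧ d.isLeft) →
        ¬ (a.isRight ∧ b.isRight ∧ c.isRight ∧ d.isRight) →
        fuseEl el s b c = s ∧ fuseEl el s a b ≠ s) ∧
    (∀ a b c d, IsTriad (fuseE E iv s) (fuseEl el s) a b c d →
        fuseIv iv s a = fuseIv iv s d) ∧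
    (∀ a b c d, IsTriad (fuseE E iv s) (fuseEl el s) a b c d →
        lt (fuseEl el s a b) (fuseEl el s b c)) := by
  -- classification of all triads of the fused graph
  have key : ∀ a b c d, IsTriad (fuseE E iv s) (fuseEl el s) a b c d →
      (∃ a' b' c' d', a = Sum.inl a' ∧ b = Sum.inl b' ∧ c = Sum.inl c' ∧ d = Sum.inl d' ∧
        IsTriad E el a' b' c' d') ∨
      (∃ a' b' c' d', a = Sum.inr a' ∧ b = Sum.inr b' ∧ c = Sum.inr c' ∧ d = Sum.inr d' ∧
        IsTriad E el a' b' c' d') ∨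
      (∃ a' b', ((a = Sum.inl a' ∧ b = Sum.inl b' ∧ c = Sum.inr b' ∧ d = Sum.inr a') ∨
                 (a = Sum.inr a' ∧ b = Sum.inr b' ∧ c = Sum.inl b' ∧ d = Sum.inl a')) ∧
        iv b' = s ∧ iv a' ≠ s ∧ E a' b') := by
    rintro (a' | a') (b' | b') (c' | c') (d' | d')
        ⟨hab, hbc, hcd, hl, hac, hbd, had⟩ <;>
      simp only [fuseE, fuseEl] at hab hbc hcd hl
    -- LLLL
    · refine Or.inl ⟨a', b', c', d', rfl, rfl, rfl, rfl, hab, hbc, hcd,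
        Fin.succAbove_right_injective hl, ?_, ?_, ?_⟩ <;>
        · intro h; simp [h] at hac hbd had
    -- LLLR
    · exact absurd hl (Fin.succAbove_ne s _)
    -- LLRL
    · exact absurd hl (Fin.succAbove_ne s _)
    -- LLRR : main case, middle edge crosses
    · obtain ⟨rfl, hivb⟩ := hbc
      have hel : el a' b' = el b' d' := Fin.succAbove_right_injective hl
      have had' : a' = d' := by
        by_contra hne
        exact hP2 b' a' d' (hEsymm _ _ hab) hcd hne (by rw [helsymm b' a']; exact hel)
      subst had'
      exact Or.inr (Or.inr ⟨a', b', Or.inl ⟨rfl, rfl, rfl, rfl⟩, hivb,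
        fun h => hP1 a' b' hab (h.trans hivb.symm), hab⟩)
    -- LRLL
    · exact absurd hl.symm (Fin.succAbove_ne s _)
    -- LRLR
    · obtain ⟨rfl, _⟩ := hab
      obtain ⟨rfl, _⟩ := hbc
      exact absurd rfl hac
    -- LRRL
    · obtain ⟨rfl, hiva⟩ := hab
      obtain ⟨rfl, hivd⟩ := hcd
      exact absurd (hiva.trans hivd.symm) (hP1 _ _ hbc)
    -- LRRR
    · exact absurd hl.symm (Fin.succAbove_ne s _)
    -- RLLL
    · exact absurd hl.symm (Fin.succAbove_ne s _)
    -- RLLR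
    · obtain ⟨rfl, hiva⟩ := hab
      obtain ⟨rfl, hivd⟩ := hcd
      exact absurd (hiva.trans hivd.symm) (hP1 _ _ hbc)
    -- RLRL
    · obtain ⟨rfl, _⟩ := hab
      obtain ⟨rfl, _⟩ := hbc
      exact absurd rfl hac
    -- RLRR
    · exact absurd hl.symm (Fin.succAbove_ne s _)
    -- RRLL : main case, mirrored
    · obtain ⟨rfl, hivb⟩ := hbc
      have hel : el a' b' = el b' d' := Fin.succAbove_right_injective hl
      have had' : a' = d' := by
        by_contra hne
        exact hP2 b' a' d' (hEsymm _ _ hab) hcd hne (by rw [helsymm b' a']; exact hel)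
      subst had'
      exact Or.inr (Or.inr ⟨a', b', Or.inr ⟨rfl, rfl, rfl, rfl⟩, hivb,
        fun h => hP1 a' b' hab (h.trans hivb.symm), hab⟩)
    -- RRLR
    · exact absurd hl (Fin.succAbove_ne s _)
    -- RRRL
    · exact absurd hl (Fin.succAbove_ne s _)
    -- RRRR
    · refine Or.inr (Or.inl ⟨a', b', c', d', rfl, rfl, rfl, rfl, hab, hbc, hcd,
        Fin.succAbove_right_injective hl, ?_, ?_, ?_⟩) <;>
        · intro h; simp [h] at hac hbd had
  have sa_eq : ∀ x : Fin (n+1), x ≠ s →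
      (s.castSucc).succAbove x = (s.succ).succAbove x := by
    intro x hx
    rcases lt_or_gt_of_ne hx with h | h
    · rw [Fin.succAbove_of_castSucc_lt _ _ (Fin.castSucc_lt_castSucc_iff.mpr h),
          Fin.succAbove_of_castSucc_lt _ _ (Fin.castSucc_lt_succ_iff.mpr h.le)]
    · rw [Fin.succAbove_of_le_castSucc _ _ (Fin.castSucc_le_castSucc_iff.mpr h.le),
          Fin.succAbove_of_le_castSucc _ _ (Fin.succ_le_castSucc_iff.mpr h)]
  refine ⟨?_, ?_, ?_⟩
  · -- part 1: mixed triads have middle edge labelled s, outer edges ≠ s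
    intro a b c d ht hnl hnr
    rcases key a b c d ht with ⟨a', b', c', d', rfl, rfl, rfl, rfl, _⟩ |
        ⟨a', b', c', d', rfl, rfl, rfl, rfl, _⟩ |
        ⟨a', b', (⟨rfl, rfl, rfl, rfl⟩ | ⟨rfl, rfl, rfl, rfl⟩), _, _, _⟩
    · exact absurd (by simp) hnl
    · exact absurd (by simp) hnr
    · exact ⟨rfl, Fin.succAbove_ne s _⟩
    · exact ⟨rfl, Fin.succAbove_ne s _⟩
  · -- part 2: 𝒢(c) is triadic
    intro a b c d ht
    rcases key a b c d ht with ⟨a', b', c', d', rfl, rfl, rfl, rfl, ht'⟩ |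
        ⟨a', b', c', d', rfl, rfl, rfl, rfl, ht'⟩ |
        ⟨a', b', (⟨rfl, rfl, rfl, rfl⟩ | ⟨rfl, rfl, rfl, rfl⟩), _, hiva, _⟩
    · show (s.castSucc).succAbove (iv a') = (s.castSucc).succAbove (iv d')
      rw [htriadic _ _ _ _ ht']
    · show (s.succ).succAbove (iv a') = (s.succ).succAbove (iv d')
      rw [htriadic _ _ _ _ ht']
    · exact sa_eq _ hiva
    · exact (sa_eq _ hiva).symm
  · -- part 3: the order relations hold in the linear order lt
    intro a b c d ht
    rcases key a b c d ht with ⟨a', b', c', d', rfl, rfl, rfl, rfl, ht'⟩ |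
        ⟨a', b', c', d', rfl, rfl, rfl, rfl, ht'⟩ |
        ⟨a', b', (⟨rfl, rfl, rfl, rfl⟩ | ⟨rfl, rfl, rfl, rfl⟩), _, _, _⟩
    · exact horder _ _ _ _ ht'
    · exact horder _ _ _ _ ht'
    · exact hmax _ (Fin.succAbove_ne s _)
    · exact hmax _ (Fin.succAbove_ne s _)
end

section
/- Under binary fusion with c_s the unique maximal element of the linear order c, if 𝒢(c⁻) satisfies the S-condition, then so does 𝒢(c): for every vertex v of 𝒢(c) and every k ∈ {1,…,t+1} there exists a vertex v' with i_{v'} = k and an ordered path from v to v'. -/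
/-- The S-condition for a labelled graph with vertex labels in `Fin (m+1)`, edge
labels in `Fin m` and a strict order `lt` on edge labels (representing inequalities
between the coefficients): from every vertex `v` and for every `k` there is an
ordered path (edge labels increasing in the order `lt`) from `v` to some vertex
labelled `k`. -/
def SCondition {U : Type*} {m : ℕ} (E : U → U → Prop) (iv : U → Fin (m+1))
    (el : U → U → Fin m) (lt : Fin m → Fin m → Prop) : Prop :=
  ∀ (v : U) (k : Fin (m+1)), ∃ (len : ℕ) (p : ℕ → U),
    p 0 = v ∧ iv (p len) = k ∧
    (∀ j, j < len → E (p j) (p (j+1))) ∧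
    (∀ j, j + 1 < len → lt (el (p j) (p (j+1))) (el (p (j+1)) (p (j+2))))

/-- under binary fusion with `c_s` the unique maximal element of the
linear order `lt` on coefficients, if the base graph `𝒢(c⁻)` satisfies the
S-condition (for the induced order on the labels of `c⁻`), then so does `𝒢(c)`. -/
theorem stmt_13 {V : Type*} {n : ℕ} (E : V → V → Prop) (iv : V → Fin (n+1))
    (el : V → V → Fin n) (s : Fin (n+1))
    (lt : Fin (n+1) → Fin (n+1) → Prop)
    (hltirr : ∀ i, ¬ lt i i) (hlttrans : Transitive lt)
    (hlttot : ∀ i j, i ≠ j → lt i j ∨ lt j i)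
    (hmax : ∀ j, j ≠ s → lt j s)
    (hEsymm : ∀ v w, E v w → E w v)
    (helsymm : ∀ v w, el v w = el w v)
    (hP1 : ∀ v w, E v w → iv v ≠ iv w)
    (hP2 : ∀ v w w', E v w → E v w' → w ≠ w' → el v w ≠ el v w')
    (hS : SCondition E iv el (fun i j => lt (s.succAbove i) (s.succAbove j))) :
    SCondition (fuseE E iv s) (fuseIv iv s) (fuseEl el s) lt := by
  have hcs : (s.castSucc).succAbove s = s.succ := by
    simp [Fin.succAbove, Fin.lt_def]
  have hsc : (s.succ).succAbove s = s.castSucc := by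
    simp [Fin.succAbove, Fin.lt_def, Fin.val_succ]
  intro v k
  cases v with
  | inl v =>
    by_cases hk : k = s.castSucc
    · -- cross to the right copy at a vertex labelled s
      obtain ⟨len, p, hp0, hpk, hE, hlt⟩ := hS v s
      refine ⟨len+1, fun j => if j ≤ len then Sum.inl (p j) else Sum.inr (p len),
        ?_, ?_, ?_, ?_⟩
      · simp [hp0]
      · simp [fuseIv, hpk, hsc, hk]
      · intro j hj
        rcases lt_or_eq_of_le (Nat.lt_succ_iff.mp hj) with hj' | hj'
        · simp only [Nat.le_of_lt hj', Nat.succ_le_of_lt hj', if_pos]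
          exact hE j hj'
        · subst hj'
          simp only [le_refl, if_pos, Nat.lt_irrefl, Nat.not_succ_le_self, if_neg]
          exact ⟨rfl, hpk⟩
      · intro j hj
        have hj' : j + 1 ≤ len := Nat.lt_succ_iff.mp hj
        rcases lt_or_eq_of_le hj' with h2 | h2
        · have h0 : j ≤ len := by omega
          have h1 : j + 1 ≤ len := by omega
          have h2' : j + 2 ≤ len := by omega
          simp only [h0, h1, h2', if_pos]
          exact hlt j h2
        · have h0 : j ≤ len := by omega
          have h2' : ¬ (j + 2 ≤ len) := by omega
          simp only [h0, hj', if_pos, h2', if_neg]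
          exact hmax _ (Fin.succAbove_ne s _)
    · obtain ⟨k', hk'⟩ := Fin.exists_succAbove_eq hk
      obtain ⟨len, p, hp0, hpk, hE, hlt⟩ := hS v k'
      exact ⟨len, fun j => Sum.inl (p j), by simp [hp0],
        by simp [fuseIv, hpk, hk'], fun j hj => hE j hj, fun j hj => hlt j hj⟩
  | inr v =>
    by_cases hk : k = s.succ
    · obtain ⟨len, p, hp0, hpk, hE, hlt⟩ := hS v s
      refine ⟨len+1, fun j => if j ≤ len then Sum.inr (p j) else Sum.inl (p len),
        ?_, ?_, ?_, ?_⟩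
      · simp [hp0]
      · simp [fuseIv, hpk, hcs, hk]
      · intro j hj
        rcases lt_or_eq_of_le (Nat.lt_succ_iff.mp hj) with hj' | hj'
        · simp only [Nat.le_of_lt hj', Nat.succ_le_of_lt hj', if_pos]
          exact hE j hj'
        · subst hj'
          simp only [le_refl, if_pos, Nat.lt_irrefl, Nat.not_succ_le_self, if_neg]
          exact ⟨rfl, hpk⟩
      · intro j hj
        have hj' : j + 1 ≤ len := Nat.lt_succ_iff.mp hj
        rcases lt_or_eq_of_le hj' with h2 | h2
        · have h0 : j ≤ len := by omega
          have h1 : j + 1 ≤ len := by omega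
          have h2' : j + 2 ≤ len := by omega
          simp only [h0, h1, h2', if_pos]
          exact hlt j h2
        · have h0 : j ≤ len := by omega
          have h2' : ¬ (j + 2 ≤ len) := by omega
          simp only [h0, hj', if_pos, h2', if_neg]
          exact hmax _ (Fin.succAbove_ne s _)
    · obtain ⟨k', hk'⟩ := Fin.exists_succAbove_eq hk
      obtain ⟨len, p, hp0, hpk, hE, hlt⟩ := hS v k'
      exact ⟨len, fun j => Sum.inr (p j), by simp [hp0],
        by simp [fuseIv, hpk, hk'], fun j hj => hE j hj, fun j hj => hlt j hj⟩
end

section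
/- In an S-graph 𝒢 satisfying P₃ (evaluation) and P₈ (for every vertex v, the coefficient of m_{i_v} in f_v is zero), for any ordered path v' = v₁ → ⋯ → v_n = v with i_{v_n} = k, the difference f_v − f_{v'} can be rewritten as Σ_{j=1}^{n−1} (c_{i_j} − c_{i_{j−1}})(r^k − r^{u_j}) with c_{i_0} := 0, where c_{i_j} = c_{v_j,v_{j+1}}, u_j = i_{v_j}; in particular f_v − f_{v'} is a linear combination of the differences r^k − r^{u_j} with non-negative coefficients. -/
private lemma telesum (cc : ℕ → ℤ) :
    ∀ m, 1 ≤ m → ∑ j ∈ Finset.range m, (cc j - if j = 0 then 0 else cc (j-1)) = cc (m-1) := by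
  intro m
  induction m with
  | zero => intro h; omega
  | succ n ih =>
    intro _
    rcases Nat.eq_zero_or_pos n with h | h
    · subst h; simp
    · rw [Finset.sum_range_succ, ih h]
      have hn : n ≠ 0 := by omega
      simp [hn]

private lemma abel_aux {M : Type*} [AddCommGroup M] (cc : ℕ → ℤ) (g : ℕ → M) (F : ℕ → M) :
    ∀ m, 1 ≤ m → (∀ j, j < m → F (j+1) - F j = cc j • (g (j+1) - g j)) →
    F m - F 0 = ∑ j ∈ Finset.range m,
      ((cc j - if j = 0 then 0 else cc (j-1)) • (g m - g j)) := by
  intro m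
  induction m with
  | zero => intro h; omega
  | succ n ih =>
    intro _ heval
    rcases Nat.eq_zero_or_pos n with h | h
    · subst h; simp [heval 0 (by omega)]
    · have key : F (n+1) - F 0 = (F (n+1) - F n) + (F n - F 0) := by abel
      rw [key, heval n (by omega), ih h (fun j hj => heval j (by omega)),
        Finset.sum_range_succ]
      have hsplit : ∀ j, ((cc j - if j = 0 then 0 else cc (j-1)) • (g (n+1) - g j))
          = ((cc j - if j = 0 then 0 else cc (j-1)) • (g (n+1) - g n))
            + ((cc j - if j = 0 then 0 else cc (j-1)) • (g n - g j)) := by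
        intro j
        rw [← smul_add]; congr 1; abel
      rw [Finset.sum_congr rfl (fun j _ => hsplit j), Finset.sum_add_distrib,
        ← Finset.sum_smul, telesum cc n h]
      have hn : n ≠ 0 := by omega
      simp only [hn, if_false]
      rw [sub_smul]
      abel

/-- along an ordered path `v' = v₀ → v₁ → ⋯ → v_m = v` in an evaluation
graph (so `f_{v_{j+1}} − f_{v_j} = c_{i_j}(r^{u_{j+1}} − r^{u_j})` with `u_j` the vertex
labels, the non-negative integer coefficients `c_{i_j}` strictly increasing along the
path, and `u_m = k`), the difference `f_v − f_{v'}` rearranges by Abel summation to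
`Σ_j (c_{i_j} − c_{i_{j−1}})(r^k − r^{u_j})` with `c_{i_{−1}} := 0`; in particular it is
a linear combination of the differences `r^k − r^{u_j}` with non-negative coefficients. -/
theorem stmt_14 {M : Type*} [AddCommGroup M] (t m : ℕ) (hm : 1 ≤ m)
    (k : Fin (t+1)) (u : ℕ → Fin (t+1)) (cc : ℕ → ℤ) (r : Fin (t+1) → M)
    (F : ℕ → M)
    (hlast : u m = k)
    (heval : ∀ j, j < m → F (j+1) - F j = cc j • (r (u (j+1)) - r (u j)))
    (hpos : ∀ j, j < m → 0 ≤ cc j)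
    (hmono : ∀ j, j + 1 < m → cc j < cc (j+1)) :
    F m - F 0 = (∑ j ∈ Finset.range m,
      ((cc j - if j = 0 then 0 else cc (j-1)) • (r k - r (u j)))) ∧
    ∀ j, j < m → 0 ≤ cc j - (if j = 0 then 0 else cc (j-1)) := by
  constructor
  · have := abel_aux cc (fun j => r (u j)) F m hm heval
    rw [this]; rw [hlast]
  · intro j hj
    rcases Nat.eq_zero_or_pos j with h | h
    · subst h; simpa using hpos 0 hj
    · have hj' : j ≠ 0 := by omega
      simp only [hj', if_false]
      have := hmono (j-1) (by omega)
      have hjj : j - 1 + 1 = j := by omega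
      rw [hjj] at this
      omega
end

section
/- Let T = {1,…,t}. For a tableau 𝒯 associated to a diagram satisfying the boundary conditions, define T^0 = {1,…,t+1} and T^j to be the set of entries appearing in row j of 𝒯. Then the sets T^j are decreasing in j, and the relations of the partial order P(𝒯) all have the form b < b' with b ∈ T^j and b' ∈ T^{j−1} \ T^j for some j; consequently the relation graph of P(𝒯) has no directed cycles and P(𝒯) lifts to a linear order on T. -/
namespace Stmt16

/-- Columns have x-coordinates `1,…,t+1`. -/
def HasCol (t i : ℕ) : Prop := 1 ≤ i ∧ i ≤ t + 1

/-- `k` is the left neighbour of column `i` at level `j`: it lies to the left, has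
height `≥ j`, and every column strictly between has height `< j`.  (Level `0` is the
full row `0` of the zeroth-row convention.) -/
def IsLeftNbrAt (t : ℕ) (ht : ℕ → ℕ) (k i j : ℕ) : Prop :=
  HasCol t k ∧ k < i ∧ j ≤ ht k ∧ ∀ m, k < m → m < i → ht m < j

/-- `k` is the right neighbour of column `i` at level `j`. -/
def IsRightNbrAt (t : ℕ) (ht : ℕ → ℕ) (k i j : ℕ) : Prop :=
  HasCol t k ∧ i < k ∧ j ≤ ht k ∧ ∀ m, i < m → m < k → ht m < j

/-- The block `(i,j)` is the extremal block of row `j`: the rightmost block of its row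
if `j` is odd, the leftmost if `j` is even. -/
def IsExtremalBlock (t : ℕ) (ht : ℕ → ℕ) (i j : ℕ) : Prop :=
  (Odd j ∧ ∀ m, HasCol t m → j ≤ ht m → m ≤ i) ∨
  (Even j ∧ ∀ m, HasCol t m → j ≤ ht m → i ≤ m)

/-- The boundary conditions for a diagram with columns `1,…,t+1`: every nonempty
column outside this range is excluded, every left extremal column has even or maximal
height, and every right extremal column has odd or maximal height. -/
def Boundary (t : ℕ) (ht : ℕ → ℕ) : Prop :=
  (∀ i, ht i ≠ 0 → HasCol t i) ∧
  ∀ i, HasCol t i → 1 ≤ ht i →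
    ((∀ k, HasCol t k → k < i → ht k < ht i) →
      Even (ht i) ∨ ∀ k, HasCol t k → ht k ≤ ht i) ∧
    ((∀ k, HasCol t k → i < k → ht k < ht i) →
      Odd (ht i) ∨ ∀ k, HasCol t k → ht k ≤ ht i)

/-- `b : column → row → entry` is the numbering of the tableau of the diagram `ht`:
row `0` carries the entries `i − 1` (the zeroth-row convention), extremal blocks carry
a slash (encoded by the entry `0`), and a non-extremal block in row `j+1` inherits the
entry of the left (resp. right) neighbour at level `j` when `j` is odd (resp. even);
for `j = 0` this gives the first-row rule `b i 1 = i`. -/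
structure IsTableau (t : ℕ) (ht : ℕ → ℕ) (b : ℕ → ℕ → ℕ) : Prop where
  row0 : ∀ i, HasCol t i → b i 0 = i - 1
  slash : ∀ i j, HasCol t i → j ≤ ht i → IsExtremalBlock t ht i j → b i j = 0
  copyOdd : ∀ i j k, Odd j → HasCol t i → j + 1 ≤ ht i →
      ¬ IsExtremalBlock t ht i (j+1) → IsLeftNbrAt t ht k i j → b i (j+1) = b k j
  copyEven : ∀ i j k, Even j → HasCol t i → j + 1 ≤ ht i →
      ¬ IsExtremalBlock t ht i (j+1) → IsRightNbrAt t ht k i j → b i (j+1) = b k j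

/-- `T^j`: the set of entries of the non-extremal blocks of row `j`, with
`T^0 = {1,…,t+1}`. -/
def entrySet (t : ℕ) (ht : ℕ → ℕ) (b : ℕ → ℕ → ℕ) : ℕ → Set ℕ
  | 0 => Set.Icc 1 (t+1)
  | (j+1) => {e | ∃ i, HasCol t i ∧ j + 1 ≤ ht i ∧
      ¬ IsExtremalBlock t ht i (j+1) ∧ b i (j+1) = e}

/-- The generating relations `e < e'` of the partial order `P(𝒯)` arising at row
`j ≥ 1`.  For `j` even: `q` has left neighbour `p` at level `j`, and `v` runs over the
columns with `p ≤ v < q` present in row `j−1`, excluding the left neighbour of `q` at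
level `j−1`; the relation is `b q j < b v (j−1)`.  For `j` odd the dual rule with
right neighbours. -/
def GenRelAt (t : ℕ) (ht : ℕ → ℕ) (b : ℕ → ℕ → ℕ) (j e e' : ℕ) : Prop :=
  1 ≤ j ∧
  ((Even j ∧ ∃ p q v, HasCol t q ∧ j ≤ ht q ∧ IsLeftNbrAt t ht p q j ∧
      p ≤ v ∧ v < q ∧ HasCol t v ∧ j - 1 ≤ ht v ∧ ¬ IsLeftNbrAt t ht v q (j-1) ∧
      e = b q j ∧ e' = b v (j-1)) ∨
   (Odd j ∧ ∃ p q v, HasCol t p ∧ j ≤ ht p ∧ IsRightNbrAt t ht q p j ∧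
      p < v ∧ v ≤ q ∧ HasCol t v ∧ j - 1 ≤ ht v ∧ ¬ IsRightNbrAt t ht v p (j-1) ∧
      e = b p j ∧ e' = b v (j-1)))

section Aux

variable {t : ℕ} {ht : ℕ → ℕ} {b : ℕ → ℕ → ℕ}

lemma parity_clash {j : ℕ} (ho : Odd j) (he : Even j) : False := by
  rw [Nat.odd_iff] at ho; rw [Nat.even_iff] at he; omega

lemma mem_entrySet_zero {e : ℕ} :
    e ∈ entrySet t ht b 0 ↔ 1 ≤ e ∧ e ≤ t + 1 := by
  simp [entrySet, Set.mem_Icc]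

lemma mem_entrySet_pos {j e : ℕ} (hj : 1 ≤ j) :
    e ∈ entrySet t ht b j ↔ ∃ i, HasCol t i ∧ j ≤ ht i ∧
      ¬ IsExtremalBlock t ht i j ∧ b i j = e := by
  cases j with
  | zero => omega
  | succ n => exact Iff.rfl

lemma not_ext_odd {i j : ℕ} (hj : Odd j) (h : ¬ IsExtremalBlock t ht i j) :
    ∃ m, HasCol t m ∧ j ≤ ht m ∧ i < m := by
  unfold IsExtremalBlock at h
  push_neg at h
  obtain ⟨m, h1, h2, h3⟩ := h.1 hj
  exact ⟨m, h1, h2, by omega⟩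

lemma not_ext_even {i j : ℕ} (hj : Even j) (h : ¬ IsExtremalBlock t ht i j) :
    ∃ m, HasCol t m ∧ j ≤ ht m ∧ m < i := by
  unfold IsExtremalBlock at h
  push_neg at h
  obtain ⟨m, h1, h2, h3⟩ := h.2 hj
  exact ⟨m, h1, h2, by omega⟩

lemma not_ext_odd' {i j : ℕ} (hj : Odd j) (m : ℕ) (h1 : HasCol t m)
    (h2 : j ≤ ht m) (h3 : i < m) : ¬ IsExtremalBlock t ht i j := by
  rintro (⟨_, hall⟩ | ⟨hev, _⟩)
  · have := hall m h1 h2; omega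
  · exact parity_clash hj hev

lemma not_ext_even' {i j : ℕ} (hj : Even j) (m : ℕ) (h1 : HasCol t m)
    (h2 : j ≤ ht m) (h3 : m < i) : ¬ IsExtremalBlock t ht i j := by
  rintro (⟨hodd, _⟩ | ⟨_, hall⟩)
  · exact parity_clash hodd hj
  · have := hall m h1 h2; omega

lemma leftNbr_exists (hb : Boundary t ht) {i j : ℕ} (hj : 1 ≤ j)
    (h : ∃ m, HasCol t m ∧ m < i ∧ j ≤ ht m) : ∃ k, IsLeftNbrAt t ht k i j := by
  classical
  set S := (Finset.Icc 1 (t+1)).filter (fun m => m < i ∧ j ≤ ht m) with hS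
  obtain ⟨m, hm1, hm2, hm3⟩ := h
  have hmS : m ∈ S := by
    simp only [hS, Finset.mem_filter, Finset.mem_Icc]
    exact ⟨⟨hm1.1, hm1.2⟩, hm2, hm3⟩
  have hne : S.Nonempty := ⟨m, hmS⟩
  have hmax := S.max'_mem hne
  simp only [hS, Finset.mem_filter, Finset.mem_Icc] at hmax
  refine ⟨S.max' hne, ⟨hmax.1.1, hmax.1.2⟩, hmax.2.1, hmax.2.2, ?_⟩
  intro m' h1 h2
  by_contra hlt
  push_neg at hlt
  have hcol : HasCol t m' := hb.1 m' (by omega)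
  have hm'S : m' ∈ S := by
    simp only [hS, Finset.mem_filter, Finset.mem_Icc]
    exact ⟨⟨hcol.1, hcol.2⟩, h2, hlt⟩
  have := S.le_max' m' hm'S
  omega

lemma rightNbr_exists (hb : Boundary t ht) {i j : ℕ} (hj : 1 ≤ j)
    (h : ∃ m, HasCol t m ∧ i < m ∧ j ≤ ht m) : ∃ k, IsRightNbrAt t ht k i j := by
  classical
  set S := (Finset.Icc 1 (t+1)).filter (fun m => i < m ∧ j ≤ ht m) with hS
  obtain ⟨m, hm1, hm2, hm3⟩ := h
  have hmS : m ∈ S := by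
    simp only [hS, Finset.mem_filter, Finset.mem_Icc]
    exact ⟨⟨hm1.1, hm1.2⟩, hm2, hm3⟩
  have hne : S.Nonempty := ⟨m, hmS⟩
  have hmin := S.min'_mem hne
  simp only [hS, Finset.mem_filter, Finset.mem_Icc] at hmin
  refine ⟨S.min' hne, ⟨hmin.1.1, hmin.1.2⟩, hmin.2.1, hmin.2.2, ?_⟩
  intro m' h1 h2
  by_contra hlt
  push_neg at hlt
  have hcol : HasCol t m' := hb.1 m' (by omega)
  have hm'S : m' ∈ S := by
    simp only [hS, Finset.mem_filter, Finset.mem_Icc]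
    exact ⟨⟨hcol.1, hcol.2⟩, h1, hlt⟩
  have := S.min'_le m' hm'S
  omega

lemma row1_val (hb : Boundary t ht) (htab : IsTableau t ht b) {i : ℕ}
    (h1 : HasCol t i) (h2 : 1 ≤ ht i) (h3 : ¬ IsExtremalBlock t ht i 1) :
    b i 1 = i := by
  obtain ⟨m, hm1, hm2, hm3⟩ := not_ext_odd (by decide) h3
  have hcol : HasCol t (i+1) := ⟨by omega, by have := hm1.2; omega⟩
  have hnbr : IsRightNbrAt t ht (i+1) i 0 :=
    ⟨hcol, by omega, by omega, fun m ha hb' => by omega⟩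
  have hc := htab.copyEven i 0 (i+1) Even.zero h1 (by omega) h3 hnbr
  rw [hc, htab.row0 (i+1) hcol]
  omega

lemma copy_step_odd (hb : Boundary t ht) (htab : IsTableau t ht b) {i j : ℕ}
    (hj : Odd j) (hi : HasCol t i) (hhi : j + 1 ≤ ht i)
    (hne : ¬ IsExtremalBlock t ht i (j+1)) :
    ∃ k, IsLeftNbrAt t ht k i j ∧ ¬ IsExtremalBlock t ht k j ∧ b i (j+1) = b k j := by
  have hj1 : 1 ≤ j := by rw [Nat.odd_iff] at hj; omega
  have hev : Even (j+1) := Odd.add_one hj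
  obtain ⟨m, hm1, hm2, hm3⟩ := not_ext_even hev hne
  obtain ⟨k, hk⟩ := leftNbr_exists hb hj1 ⟨m, hm1, hm3, by omega⟩
  exact ⟨k, hk, not_ext_odd' hj i hi (by omega) hk.2.1,
    htab.copyOdd i j k hj hi hhi hne hk⟩

lemma copy_step_even (hb : Boundary t ht) (htab : IsTableau t ht b) {i j : ℕ}
    (hj : Even j) (hj1 : 1 ≤ j) (hi : HasCol t i) (hhi : j + 1 ≤ ht i)
    (hne : ¬ IsExtremalBlock t ht i (j+1)) :
    ∃ k, IsRightNbrAt t ht k i j ∧ ¬ IsExtremalBlock t ht k j ∧ b i (j+1) = b k j := by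
  have hod : Odd (j+1) := Even.add_one hj
  obtain ⟨m, hm1, hm2, hm3⟩ := not_ext_odd hod hne
  obtain ⟨k, hk⟩ := rightNbr_exists hb hj1 ⟨m, hm1, hm3, by omega⟩
  exact ⟨k, hk, not_ext_even' hj i hi (by omega) hk.2.1,
    htab.copyEven i j k hj hi hhi hne hk⟩

lemma leftNbr_mono {k k' i i' r : ℕ} (h : IsLeftNbrAt t ht k i r)
    (h' : IsLeftNbrAt t ht k' i' r) (hii : i < i') (hhi : r ≤ ht i) : k < k' := by
  have h1 : i ≤ k' := by
    by_contra hc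
    push_neg at hc
    have := h'.2.2.2 i hc hii
    omega
  have := h.2.1
  omega

lemma rightNbr_mono {k k' i i' r : ℕ} (h : IsRightNbrAt t ht k i r)
    (h' : IsRightNbrAt t ht k' i' r) (hii : i < i') (hhi' : r ≤ ht i') : k < k' := by
  have h1 : k ≤ i' := by
    by_contra hc
    push_neg at hc
    have := h.2.2.2 i' hii hc
    omega
  have := h'.2.1
  omega

lemma rowInj (hb : Boundary t ht) (htab : IsTableau t ht b) :
    ∀ r, 1 ≤ r → ∀ i i', HasCol t i → r ≤ ht i → ¬ IsExtremalBlock t ht i r →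
      HasCol t i' → r ≤ ht i' → ¬ IsExtremalBlock t ht i' r →
      b i r = b i' r → i = i' := by
  intro r
  induction r with
  | zero => omega
  | succ n IH =>
    intro _ i i' hi hhi hei hi' hhi' hei' heq
    rcases Nat.eq_zero_or_pos n with rfl | hn
    · rw [row1_val hb htab hi hhi hei, row1_val hb htab hi' hhi' hei'] at heq
      exact heq
    · rcases Nat.even_or_odd n with hev | hodd
      · obtain ⟨k, hk, hke, hbk⟩ := copy_step_even hb htab hev hn hi hhi hei
        obtain ⟨k', hk', hke', hbk'⟩ := copy_step_even hb htab hev hn hi' hhi' hei'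
        have hkk : k = k' := IH hn k k' hk.1 hk.2.2.1 hke hk'.1 hk'.2.2.1 hke'
          (by rw [← hbk, ← hbk', heq])
        by_contra hne2
        rcases Nat.lt_or_ge i i' with h | h
        · have := rightNbr_mono hk hk' h (by omega)
          omega
        · have h' : i' < i := by omega
          have := rightNbr_mono hk' hk h' (by omega)
          omega
      · obtain ⟨k, hk, hke, hbk⟩ := copy_step_odd hb htab hodd hi hhi hei
        obtain ⟨k', hk', hke', hbk'⟩ := copy_step_odd hb htab hodd hi' hhi' hei'
        have hkk : k = k' := IH hn k k' hk.1 hk.2.2.1 hke hk'.1 hk'.2.2.1 hke'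
          (by rw [← hbk, ← hbk', heq])
        by_contra hne2
        rcases Nat.lt_or_ge i i' with h | h
        · have := leftNbr_mono hk hk' h (by omega)
          omega
        · have h' : i' < i := by omega
          have := leftNbr_mono hk' hk h' (by omega)
          omega

lemma entry_step (hb : Boundary t ht) (htab : IsTableau t ht b) (j : ℕ) :
    entrySet t ht b (j+1) ⊆ entrySet t ht b j := by
  intro e he
  obtain ⟨i, hi, hhi, hne, hbe⟩ := he
  rcases Nat.eq_zero_or_pos j with rfl | hj
  · have hv := row1_val hb htab hi hhi hne
    rw [mem_entrySet_zero]
    have hei : e = i := by rw [← hbe]; exact hv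
    have := hi.1; have := hi.2
    omega
  · rcases Nat.even_or_odd j with hev | hodd
    · obtain ⟨k, hk, hke, hbk⟩ := copy_step_even hb htab hev hj hi hhi hne
      exact (mem_entrySet_pos hj).mpr ⟨k, hk.1, hk.2.2.1, hke, by rw [← hbk, hbe]⟩
    · obtain ⟨k, hk, hke, hbk⟩ := copy_step_odd hb htab hodd hi hhi hne
      exact (mem_entrySet_pos hj).mpr ⟨k, hk.1, hk.2.2.1, hke, by rw [← hbk, hbe]⟩

lemma entry_chain (hb : Boundary t ht) (htab : IsTableau t ht b) :
    ∀ d j, entrySet t ht b (j + d) ⊆ entrySet t ht b j := by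
  intro d
  induction d with
  | zero => intro j; exact subset_rfl
  | succ n ihn => intro j e he; exact ihn j (entry_step hb htab (j+n) he)

lemma entry_antitone (hb : Boundary t ht) (htab : IsTableau t ht b) {j j' : ℕ}
    (h : j ≤ j') : entrySet t ht b j' ⊆ entrySet t ht b j := by
  obtain ⟨d, rfl⟩ := Nat.exists_eq_add_of_le h
  exact entry_chain hb htab d j

lemma genrel_props (hb : Boundary t ht) (htab : IsTableau t ht b) {j e e' : ℕ}
    (h : GenRelAt t ht b j e e') :
    e ∈ entrySet t ht b j ∧ e' ∈ entrySet t ht b (j-1) ∧ e' ∉ entrySet t ht b j := by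
  obtain ⟨hj, h | h⟩ := h
  · -- even case, j ≥ 2
    obtain ⟨hev, p, q, v, hq, hhq, hpq, hpv, hvq, hv, hhv, hvn, rfl, rfl⟩ := h
    have hj2 : 2 ≤ j := by rw [Nat.even_iff] at hev; omega
    have hj1 : 1 ≤ j - 1 := by omega
    have hoddj1 : Odd (j-1) := by
      rw [Nat.even_iff] at hev; rw [Nat.odd_iff]; omega
    have hqe : ¬ IsExtremalBlock t ht q j :=
      not_ext_even' hev p hpq.1 hpq.2.2.1 hpq.2.1
    have he : b q j ∈ entrySet t ht b j :=
      (mem_entrySet_pos (by omega)).mpr ⟨q, hq, hhq, hqe, rfl⟩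
    have hve : ¬ IsExtremalBlock t ht v (j-1) :=
      not_ext_odd' hoddj1 q hq (by omega) hvq
    have he' : b v (j-1) ∈ entrySet t ht b (j-1) :=
      (mem_entrySet_pos hj1).mpr ⟨v, hv, hhv, hve, rfl⟩
    refine ⟨he, he', ?_⟩
    intro hmem
    obtain ⟨i, hi, hhi, hie, hbe⟩ := (mem_entrySet_pos (by omega)).mp hmem
    have hj' : j - 1 + 1 = j := by omega
    obtain ⟨k, hk, hke, hbk⟩ := copy_step_odd hb htab hoddj1 hi
      (by rw [hj']; exact hhi) (by rw [hj']; exact hie)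
    rw [hj'] at hbk
    have hkeq : b k (j-1) = b v (j-1) := by rw [← hbk, hbe]
    have hkv : k = v := rowInj hb htab (j-1) hj1 k v hk.1 hk.2.2.1 hke hv hhv hve hkeq
    subst hkv
    rcases lt_trichotomy i q with hlt | rfl | hgt
    · have hvi : k < i := hk.2.1
      have := hpq.2.2.2 i (by omega) hlt
      omega
    · exact hvn hk
    · have := hk.2.2.2 q hvq hgt
      omega
  · -- odd case
    obtain ⟨hodd, p, q, v, hp, hhp, hqr, hpv, hvq, hv, hhv, hvn, rfl, rfl⟩ := h
    have hpe : ¬ IsExtremalBlock t ht p j :=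
      not_ext_odd' hodd q hqr.1 hqr.2.2.1 hqr.2.1
    have he : b p j ∈ entrySet t ht b j :=
      (mem_entrySet_pos hj).mpr ⟨p, hp, hhp, hpe, rfl⟩
    rcases Nat.lt_or_ge j 2 with hj1 | hj2
    · -- j = 1
      have hjeq : j = 1 := by omega
      subst hjeq
      have hbv : b v 0 = v - 1 := htab.row0 v hv
      have hvp2 : p + 2 ≤ v := by
        by_contra hc
        push_neg at hc
        refine hvn ⟨hv, hpv, Nat.zero_le _, fun m h1 h2 => ?_⟩
        omega
      refine ⟨he, ?_, ?_⟩
      · rw [mem_entrySet_zero, hbv]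
        have := hv.2
        omega
      · intro hmem
        obtain ⟨i, hi, hhi, hie, hbe⟩ := (mem_entrySet_pos le_rfl).mp hmem
        rw [row1_val hb htab hi hhi hie, hbv] at hbe
        have hiq : i < q := by have := hv.1; omega
        have hip : p < i := by omega
        have := hqr.2.2.2 i hip hiq
        omega
    · -- j odd ≥ 3
      have hj1 : 1 ≤ j - 1 := by omega
      have hevj1 : Even (j-1) := by
        rw [Nat.odd_iff] at hodd; rw [Nat.even_iff]; omega
      have hve : ¬ IsExtremalBlock t ht v (j-1) :=
        not_ext_even' hevj1 p hp (by omega) hpv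
      have he' : b v (j-1) ∈ entrySet t ht b (j-1) :=
        (mem_entrySet_pos hj1).mpr ⟨v, hv, hhv, hve, rfl⟩
      refine ⟨he, he', ?_⟩
      intro hmem
      obtain ⟨i, hi, hhi, hie, hbe⟩ := (mem_entrySet_pos (by omega)).mp hmem
      have hj' : j - 1 + 1 = j := by omega
      obtain ⟨k, hk, hke, hbk⟩ := copy_step_even hb htab hevj1 hj1 hi
        (by rw [hj']; exact hhi) (by rw [hj']; exact hie)
      rw [hj'] at hbk
      have hkeq : b k (j-1) = b v (j-1) := by rw [← hbk, hbe]
      have hkv : k = v := rowInj hb htab (j-1) hj1 k v hk.1 hk.2.2.1 hke hv hhv hve hkeq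
      subst hkv
      rcases lt_trichotomy i p with hlt | rfl | hgt
      · have := hk.2.2.2 p hlt hpv
        omega
      · exact hvn hk
      · have hik : i < k := hk.2.1
        have := hqr.2.2.2 i hgt (by omega)
        omega

end Aux

/-- for a tableau of a diagram satisfying the boundary conditions, the
entry sets `T^j` are decreasing in `j`; every generating relation `e < e'` of `P(𝒯)`
arising at row `j` has `e ∈ T^j` and `e' ∈ T^{j−1} \ T^j`; consequently the relation
graph of `P(𝒯)` has no cycles and `P(𝒯)` lifts to a linear order. -/
theorem stmt_16 (t : ℕ) (ht : ℕ → ℕ) (b : ℕ → ℕ → ℕ)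
    (hb : Boundary t ht) (htab : IsTableau t ht b) :
    (∀ j : ℕ, entrySet t ht b (j+1) ⊆ entrySet t ht b j) ∧
    (∀ j e e', GenRelAt t ht b j e e' →
        e ∈ entrySet t ht b j ∧ e' ∈ entrySet t ht b (j-1) ∧ e' ∉ entrySet t ht b j) ∧
    (∃ f : ℕ → ℕ, Function.Injective f ∧
        ∀ j e e', GenRelAt t ht b j e e' → f e < f e') := by
  classical
  refine ⟨entry_step hb htab, fun j e e' h => genrel_props hb htab h, ?_⟩
  set M := (Finset.Icc 1 (t+1)).sup ht with hMdef
  have hM : ∀ i, HasCol t i → ht i ≤ M :=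
    fun i hi => Finset.le_sup (Finset.mem_Icc.mpr ⟨hi.1, hi.2⟩)
  have hboundS : ∀ e x, x ∈ {j | e ∈ entrySet t ht b j} → x ≤ M := by
    intro e x hx
    rcases Nat.eq_zero_or_pos x with rfl | hx1
    · exact Nat.zero_le _
    · obtain ⟨i, hi, hhi, _, _⟩ := (mem_entrySet_pos hx1).mp hx
      exact le_trans hhi (hM i hi)
  set R : ℕ → ℕ := fun e => sSup {j | e ∈ entrySet t ht b j} with hRdef
  have hbdd : ∀ e, BddAbove {j | e ∈ entrySet t ht b j} :=
    fun e => ⟨M, fun x hx => hboundS e x hx⟩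
  have hRM : ∀ e, R e ≤ M := by
    intro e
    rcases Set.eq_empty_or_nonempty {j | e ∈ entrySet t ht b j} with hemp | hne
    · simp [hRdef, hemp]
    · exact csSup_le hne (hboundS e)
  set f : ℕ → ℕ := fun e =>
    if 1 ≤ e ∧ e ≤ t + 1 then (M - R e) * (t+2) + e else (M+1) * (t+2) + e with hfdef
  have hval_in : ∀ e, (1 ≤ e ∧ e ≤ t + 1) → f e = (M - R e) * (t+2) + e := by
    intro e he; simp [hfdef, he]
  have hval_out : ∀ e, ¬(1 ≤ e ∧ e ≤ t + 1) → f e = (M+1) * (t+2) + e := by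
    intro e he; simp [hfdef, he]
  have hlt_in_out : ∀ x y, (1 ≤ x ∧ x ≤ t + 1) → ¬(1 ≤ y ∧ y ≤ t + 1) → f x < f y := by
    intro x y hx hy
    rw [hval_in x hx, hval_out y hy]
    have h1 : (M - R x) * (t+2) ≤ M * (t+2) :=
      Nat.mul_le_mul (Nat.sub_le _ _) le_rfl
    have h2 : (M+1) * (t+2) = M * (t+2) + (t+2) := by ring
    have := hx.2
    linarith
  refine ⟨f, ?_, ?_⟩
  · intro a a' hfa
    by_cases ha : 1 ≤ a ∧ a ≤ t + 1 <;> by_cases ha' : 1 ≤ a' ∧ a' ≤ t + 1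
    · rw [hval_in a ha, hval_in a' ha'] at hfa
      have hmod : a % (t+2) = a' % (t+2) := by
        have := congrArg (· % (t+2)) hfa
        simpa only [Nat.mul_add_mod'] using this
      rw [Nat.mod_eq_of_lt (show a < t+2 by omega),
        Nat.mod_eq_of_lt (show a' < t+2 by omega)] at hmod
      exact hmod
    · exact absurd hfa (Nat.ne_of_lt (hlt_in_out a a' ha ha'))
    · exact absurd hfa.symm (Nat.ne_of_lt (hlt_in_out a' a ha' ha))
    · rw [hval_out a ha, hval_out a' ha'] at hfa
      exact Nat.add_left_cancel hfa
  · intro j e e' h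
    have hj : 1 ≤ j := h.1
    obtain ⟨he, he', hne⟩ := genrel_props hb htab h
    have heIcc : 1 ≤ e ∧ e ≤ t + 1 :=
      mem_entrySet_zero.mp (entry_antitone hb htab (Nat.zero_le j) he)
    have he'Icc : 1 ≤ e' ∧ e' ≤ t + 1 :=
      mem_entrySet_zero.mp (entry_antitone hb htab (Nat.zero_le (j-1)) he')
    have hRe : j ≤ R e := le_csSup (hbdd e) he
    have hRe' : R e' ≤ j - 1 := by
      refine csSup_le ⟨j - 1, he'⟩ ?_
      intro x hx
      by_contra hc
      push_neg at hc
      exact hne (entry_antitone hb htab (by omega : j ≤ x) hx)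
    have hReM : R e ≤ M := hRM e
    rw [hval_in e heIcc, hval_in e' he'Icc]
    have hsub : M - R e + 1 ≤ M - R e' := by omega
    calc (M - R e) * (t+2) + e < (M - R e) * (t+2) + (t+2) := by omega
      _ = (M - R e + 1) * (t+2) := by ring
      _ ≤ (M - R e') * (t+2) := Nat.mul_le_mul hsub le_rfl
      _ ≤ (M - R e') * (t+2) + e' := Nat.le_add_right _ _

end Stmt16
end
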